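/- arXiv:math/0505310 — 2 statements merged into one kernel-verified Lean document; each statement's English description precedes it below -/
import Mathlib

section
/- For every integer N ≥ 2, all indices 1 ≤ i, j ≤ N−1, and every smooth complex-valued function f of the variables T_{k,i}, the Gauss–Givental operators satisfy E_{i,i+1}(E_{j+1,j} f) − E_{j+1,j}(E_{i,i+1} f) = δ_{i,j} · ( E_{i,i} f − E_{i+1,i+1} f ). -/
noncomputable section

/-- Value of the variable `T_{k,i}` (1-based indices), with the convention that
`T_{k,i} = 0` whenever `(k,i)` does not satisfy `1 ≤ i ≤ k ≤ N-1`
(in particular `T_{N,i} = 0`). -/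
def tv (N : ℕ) (T : (Fin N × Fin N) → ℝ) (k i : ℕ) : ℝ :=
  if h : 1 ≤ i ∧ i ≤ k ∧ k ≤ N - 1 then T (⟨k - 1, by omega⟩, ⟨i - 1, by omega⟩) else 0

/-- Partial derivative `∂f/∂T_{k,i}` (1-based indices), with the convention that it is
zero whenever `(k,i)` does not satisfy `1 ≤ i ≤ k ≤ N-1`. -/
def pd (N : ℕ) (f : ((Fin N × Fin N) → ℝ) → ℂ) (k i : ℕ) (T : (Fin N × Fin N) → ℝ) : ℂ :=
  if h : 1 ≤ i ∧ i ≤ k ∧ k ≤ N - 1 then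
    fderiv ℝ f T (Pi.single ((⟨k - 1, by omega⟩ : Fin N), (⟨i - 1, by omega⟩ : Fin N)) 1)
  else 0

/-- The Gauss–Givental Cartan operator `E_{i,i}`. -/
def Ed (N : ℕ) (μ : ℕ → ℂ) (i : ℕ) (f : ((Fin N × Fin N) → ℝ) → ℂ)
    (T : (Fin N × Fin N) → ℝ) : ℂ :=
  μ i * f T + ∑ k ∈ Finset.Icc 1 (i - 1), pd N f (N + k - i) k T
    - ∑ k ∈ Finset.Icc i (N - 1), pd N f k i T

/-- The Gauss–Givental raising operator `E_{i,i+1}`. -/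
def Er (N : ℕ) (i : ℕ) (f : ((Fin N × Fin N) → ℝ) → ℂ) (T : (Fin N × Fin N) → ℝ) : ℂ :=
  ∑ n ∈ Finset.Icc 1 i,
    (∑ k ∈ Finset.Icc n i, (Real.exp (tv N T (N + k - i) k - tv N T (N + k - i - 1) k) : ℂ)) *
      (pd N f (N + n - i - 1) n T - pd N f (N + n - i - 1) (n - 1) T)

/-- The Gauss–Givental lowering operator `E_{i+1,i}`. -/
def El (N : ℕ) (μ : ℕ → ℂ) (i : ℕ) (f : ((Fin N × Fin N) → ℝ) → ℂ)
    (T : (Fin N × Fin N) → ℝ) : ℂ :=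
  ∑ k ∈ Finset.Icc i (N - 1),
    (Real.exp (tv N T k i - tv N T (k + 1) (i + 1)) : ℂ) *
      ((μ i - μ (i + 1)) * f T + ∑ s ∈ Finset.Icc i k, (pd N f s (i + 1) T - pd N f s i T))

/-!
All three operators are first order: `E_{i,i+1} = ∂_X`, `E_{j+1,j} = ∂_Y + c` and
`E_{i,i} = μ_i + ∂_{V_i}`, where `X`, `Y`, `c` are sums of exponentials of linear forms times
constants and `V_i` is constant. Hence `[E_{i,i+1}, E_{j+1,j}] = ∂_{[X,Y]} + X(c)` by the symmetry
of second derivatives. Differentiating the exponentials of `Y` along `X` and those of `X` along `Y`,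
only the columns `j` and `j + 1` of `X` survive, and both `[X, Y]` and `X(c)` take the form
`w_j Q(j) - w_{j+1} Q(j+1)`. The weights telescope, `w_j = w_{j+1}`, and so do the vectors `Q`,
so everything cancels unless `i = j`; then only the first term is present, with `w_i = 1` because
`T_{N,·} = 0`, and it yields `V_i - V_{i+1}` and `μ_i - μ_{i+1}`.
-/

open Finset

section FirstOrderOperators

variable {𝕜 E 𝔸 : Type*} [NontriviallyNormedField 𝕜] [NormedAddCommGroup E] [NormedSpace 𝕜 E]
  [NormedCommRing 𝔸] [NormedAlgebra 𝕜 𝔸]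

theorem firstOrder_commutator_eq_lieBracket {f c : E → 𝔸} {X Y : E → E} {x : E} {n : WithTop ℕ∞}
    (hf : ContDiffAt 𝕜 n f x) (hn : minSmoothness 𝕜 2 ≤ n) (hX : DifferentiableAt 𝕜 X x)
    (hY : DifferentiableAt 𝕜 Y x) (hc : DifferentiableAt 𝕜 c x) :
    fderiv 𝕜 (fun y => fderiv 𝕜 f y (Y y) + c y * f y) x (X x)
        - (fderiv 𝕜 (fun y => fderiv 𝕜 f y (X y)) x (Y x) + c x * fderiv 𝕜 f x (X x))
      = fderiv 𝕜 f x (VectorField.lieBracket 𝕜 X Y x) + fderiv 𝕜 c x (X x) * f x := by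
  have h2n : 2 ≤ n := le_minSmoothness.trans hn
  have hf₁ : DifferentiableAt 𝕜 f x := hf.differentiableAt (two_pos.trans_le h2n).ne'
  have hdf : DifferentiableAt 𝕜 (fderiv 𝕜 f) x :=
    (hf.fderiv_right (m := 1) (by rwa [one_add_one_eq_two])).differentiableAt one_ne_zero
  rw [fderiv_fun_add (hdf.clm_apply hY) (hc.fun_mul hf₁), fderiv_fun_mul hc hf₁,
    VectorField.fderiv_apply_lieBracket hf hn hY hX]
  simp only [add_apply, smul_apply, smul_eq_mul]
  ring

end FirstOrderOperators

section ExpSums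

variable {E F ι : Type*} [NormedAddCommGroup E] [NormedSpace ℝ E] [NormedAddCommGroup F]
  [NormedSpace ℝ F]

theorem hasFDerivAt_sum_exp_smul (s : Finset ι) (ℓ : ι → E →L[ℝ] ℝ) (v : ι → F) (x : E) :
    HasFDerivAt (fun y => ∑ k ∈ s, Real.exp (ℓ k y) • v k)
      (∑ k ∈ s, (Real.exp (ℓ k x) • ℓ k).smulRight (v k)) x :=
  HasFDerivAt.fun_sum fun k _ => ((ℓ k).hasFDerivAt.exp).smul_const (v k)

theorem fderiv_sum_exp_smul_apply (s : Finset ι) (ℓ : ι → E →L[ℝ] ℝ) (v : ι → F) (x w : E) :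
    fderiv ℝ (fun y => ∑ k ∈ s, Real.exp (ℓ k y) • v k) x w
      = ∑ k ∈ s, (Real.exp (ℓ k x) * ℓ k w) • v k := by
  simp [(hasFDerivAt_sum_exp_smul s ℓ v x).fderiv, mul_smul]

end ExpSums

theorem Finset.sum_Icc_sub_sum_Icc_succ {M : Type*} [AddCommGroup M] (g : ℕ → M) (n m : ℕ) :
    ∑ k ∈ Icc n m, g k - ∑ k ∈ Icc (n + 1) m, g k = if n ≤ m then g n else 0 := by
  split_ifs with h
  · rw [← add_sum_Ioc_eq_sum_Icc h, Icc_add_one_left_eq_Ioc, add_sub_cancel_right]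
  · rw [Icc_eq_empty (by omega), Icc_eq_empty (by omega), sub_self]

theorem Finset.sum_Icc_sum_Icc_comm {M : Type*} [AddCommMonoid M] (a b : ℕ) (g : ℕ → ℕ → M) :
    ∑ k ∈ Icc a b, ∑ s ∈ Icc a k, g k s = ∑ s ∈ Icc a b, ∑ k ∈ Icc s b, g k s :=
  sum_comm' fun k s => by simp only [mem_Icc]; omega

namespace GaussGivental

abbrev Coords (N : ℕ) := Fin N × Fin N → ℝ

def coord (N k i : ℕ) : Coords N →L[ℝ] ℝ :=
  if h : 1 ≤ i ∧ i ≤ k ∧ k ≤ N - 1 then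
    ContinuousLinearMap.proj ((⟨k - 1, by omega⟩ : Fin N), (⟨i - 1, by omega⟩ : Fin N))
  else 0

def basisVec (N k i : ℕ) : Coords N :=
  if h : 1 ≤ i ∧ i ≤ k ∧ k ≤ N - 1 then
    Pi.single ((⟨k - 1, by omega⟩ : Fin N), (⟨i - 1, by omega⟩ : Fin N)) 1
  else 0

theorem tv_eq_coord (N : ℕ) (T : Coords N) (k i : ℕ) : tv N T k i = coord N k i T := by
  unfold tv coord
  split_ifs <;> rfl

theorem pd_eq_fderiv_basisVec (N : ℕ) (g : Coords N → ℂ) (k i : ℕ) (T : Coords N) :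
    pd N g k i T = fderiv ℝ g T (basisVec N k i) := by
  unfold pd basisVec
  split_ifs <;> simp

theorem coord_eq_zero {N k i : ℕ} (h : ¬(1 ≤ i ∧ i ≤ k ∧ k ≤ N - 1)) : coord N k i = 0 :=
  dif_neg h

theorem basisVec_eq_zero {N k i : ℕ} (h : ¬(1 ≤ i ∧ i ≤ k ∧ k ≤ N - 1)) :
    basisVec N k i = 0 :=
  dif_neg h

theorem coord_basisVec (N a b c d : ℕ) :
    coord N a b (basisVec N c d)
      = if a = c ∧ b = d ∧ 1 ≤ b ∧ b ≤ a ∧ a ≤ N - 1 then 1 else 0 := by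
  unfold coord basisVec
  split_ifs <;> simp_all [Pi.single_apply, Prod.ext_iff, Fin.ext_iff] <;> omega

variable (N : ℕ)

def raiseExponent (i k : ℕ) : Coords N →L[ℝ] ℝ :=
  coord N (N + k - i) k - coord N (N + k - i - 1) k

def raiseCoeff (i : ℕ) (T : Coords N) (n : ℕ) : ℝ :=
  ∑ k ∈ Icc n i, Real.exp (raiseExponent N i k T)

def raiseDir (i n : ℕ) : Coords N :=
  basisVec N (N + n - i - 1) n - basisVec N (N + n - i - 1) (n - 1)

def raiseDirSum (i m : ℕ) : Coords N := ∑ n ∈ Icc 1 m, raiseDir N i n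

/-- The two sums of `Er` in the opposite order (`raiseField_eq_sum_raiseCoeff_smul`), so that
each summand is the exponential of a linear form times a constant vector. -/
def raiseField (i : ℕ) (T : Coords N) : Coords N :=
  ∑ k ∈ Icc 1 i, Real.exp (raiseExponent N i k T) • raiseDirSum N i k

theorem raiseField_eq_sum_raiseCoeff_smul (i : ℕ) (T : Coords N) :
    raiseField N i T = ∑ n ∈ Icc 1 i, raiseCoeff N i T n • raiseDir N i n := by
  simp only [raiseField, raiseDirSum, raiseCoeff, smul_sum, sum_smul]
  exact sum_Icc_sum_Icc_comm 1 i _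

theorem Er_eq_fderiv_raiseField (i : ℕ) (g : Coords N → ℂ) (T : Coords N) :
    Er N i g T = fderiv ℝ g T (raiseField N i T) := by
  simp only [Er, raiseField_eq_sum_raiseCoeff_smul, raiseCoeff, raiseDir, raiseExponent,
    tv_eq_coord, pd_eq_fderiv_basisVec, map_sum, map_smul, map_sub, Complex.real_smul,
    Complex.ofReal_sum, sub_apply]

def lowerExponent (j k : ℕ) : Coords N →L[ℝ] ℝ :=
  coord N k j - coord N (k + 1) (j + 1)

def lowerTail (j : ℕ) (T : Coords N) (a : ℕ) : ℝ :=
  ∑ k ∈ Icc a (N - 1), Real.exp (lowerExponent N j k T)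

def lowerDir (j k : ℕ) : Coords N := ∑ s ∈ Icc j k, (basisVec N s (j + 1) - basisVec N s j)

def lowerField (j : ℕ) (T : Coords N) : Coords N :=
  ∑ k ∈ Icc j (N - 1), Real.exp (lowerExponent N j k T) • lowerDir N j k

theorem lowerField_eq_sum_lowerTail_smul (j : ℕ) (T : Coords N) :
    lowerField N j T
      = ∑ s ∈ Icc j (N - 1), lowerTail N j T s • (basisVec N s (j + 1) - basisVec N s j) := by
  simp only [lowerField, lowerDir, lowerTail, smul_sum, sum_smul]
  exact sum_Icc_sum_Icc_comm j (N - 1) _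

def lowerPotential (μ : ℕ → ℂ) (j : ℕ) (T : Coords N) : ℂ :=
  ∑ k ∈ Icc j (N - 1), Real.exp (lowerExponent N j k T) • (μ j - μ (j + 1))

theorem El_eq_fderiv_lowerField (μ : ℕ → ℂ) (j : ℕ) (g : Coords N → ℂ) (T : Coords N) :
    El N μ j g T = fderiv ℝ g T (lowerField N j T) + lowerPotential N μ j T * g T := by
  simp only [El, lowerField, lowerPotential, lowerDir, lowerExponent, tv_eq_coord,
    pd_eq_fderiv_basisVec, map_sum, map_smul, map_sub, Complex.real_smul, sum_mul,
    ← sum_add_distrib, sub_apply, sum_sub_distrib]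
  refine sum_congr rfl fun k _ => ?_
  ring

def cartanField (i : ℕ) : Coords N :=
  ∑ k ∈ Icc 1 (i - 1), basisVec N (N + k - i) k - ∑ k ∈ Icc i (N - 1), basisVec N k i

theorem Ed_eq_fderiv_cartanField (μ : ℕ → ℂ) (i : ℕ) (g : Coords N → ℂ) (T : Coords N) :
    Ed N μ i g T = μ i * g T + fderiv ℝ g T (cartanField N i) := by
  simp only [Ed, cartanField, pd_eq_fderiv_basisVec, map_sub, map_sum]
  ring

theorem raiseCoeff_of_lt {i n : ℕ} (T : Coords N) (h : i < n) : raiseCoeff N i T n = 0 := by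
  rw [raiseCoeff, Icc_eq_empty (by omega), sum_empty]

theorem raiseCoeff_sub_raiseCoeff_succ {i n : ℕ} (T : Coords N) (h : n ≤ i) :
    raiseCoeff N i T n - raiseCoeff N i T (n + 1) = Real.exp (raiseExponent N i n T) := by
  rw [raiseCoeff, raiseCoeff, sum_Icc_sub_sum_Icc_succ, if_pos h]

theorem coord_raiseField {i a b : ℕ} (T : Coords N) (hb : 1 ≤ b) (hi : i < N) :
    coord N a b (raiseField N i T)
      = (if a = N + b - i - 1 then raiseCoeff N i T b else 0)
        - (if a = N + b - i then raiseCoeff N i T (b + 1) else 0) := by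
  simp only [raiseField_eq_sum_raiseCoeff_smul, raiseDir, map_sum, map_smul, map_sub,
    coord_basisVec, smul_sub, smul_eq_mul, mul_ite, mul_one, mul_zero, sum_sub_distrib]
  congr 1
  · rcases le_or_gt b i with hbi | hbi
    · rw [sum_eq_single_of_mem b (mem_Icc.2 ⟨hb, hbi⟩) fun n _ hn => if_neg (by omega)]
      exact if_congr (by omega) rfl rfl
    · rw [raiseCoeff_of_lt N T hbi, ite_self]
      exact sum_eq_zero fun n hn => if_neg (by rw [mem_Icc] at hn; omega)
  · rcases lt_or_ge b i with hbi | hbi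
    · rw [sum_eq_single_of_mem (b + 1) (mem_Icc.2 ⟨by omega, hbi⟩) fun n _ hn => if_neg (by omega)]
      exact if_congr (by omega) rfl rfl
    · rw [raiseCoeff_of_lt N T (by omega), ite_self]
      exact sum_eq_zero fun n hn => if_neg (by rw [mem_Icc] at hn; omega)

theorem lowerExponent_raiseField {i j k : ℕ} (T : Coords N) (hj : 1 ≤ j) (hi : i < N)
    (hk : k ≤ N - 1) :
    lowerExponent N j k (raiseField N i T)
      = (if k = N + j - i - 1 then Real.exp (raiseExponent N i j T) else 0)
        - (if k = N + j - i then Real.exp (raiseExponent N i (j + 1) T) else 0) := by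
  rw [lowerExponent, sub_apply, coord_raiseField N T hj hi, coord_raiseField N T (by omega) hi]
  split_ifs <;> first | omega | skip
  · linear_combination raiseCoeff_sub_raiseCoeff_succ N T (show j ≤ i by omega)
  · linear_combination -raiseCoeff_sub_raiseCoeff_succ N T (show j + 1 ≤ i by omega)
  · simp

theorem lowerTail_of_lt {j a : ℕ} (T : Coords N) (h : N - 1 < a) : lowerTail N j T a = 0 := by
  rw [lowerTail, Icc_eq_empty (by omega), sum_empty]

theorem lowerTail_sub_lowerTail_succ {j a : ℕ} (T : Coords N) (h : a ≤ N - 1) :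
    lowerTail N j T a - lowerTail N j T (a + 1) = Real.exp (lowerExponent N j a T) := by
  rw [lowerTail, lowerTail, sum_Icc_sub_sum_Icc_succ, if_pos h]

theorem coord_lowerField {j a b : ℕ} (T : Coords N) (hj : 1 ≤ j) (hba : b ≤ a) :
    coord N a b (lowerField N j T)
      = (if b = j + 1 then lowerTail N j T a else 0)
        - (if b = j then lowerTail N j T a else 0) := by
  have hcolumn : ∀ c, j ≤ c → ∑ s ∈ Icc j (N - 1),
      (if a = s ∧ b = c ∧ 1 ≤ b ∧ b ≤ a ∧ a ≤ N - 1 then lowerTail N j T s else 0)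
        = if b = c then lowerTail N j T a else 0 := by
    intro c hc
    by_cases ha : j ≤ a ∧ a ≤ N - 1
    · rw [sum_eq_single_of_mem a (mem_Icc.2 ha) fun s _ hs => if_neg (by omega)]
      exact if_congr (by omega) rfl rfl
    · rw [sum_eq_zero fun s hs => if_neg (by rw [mem_Icc] at hs; omega)]
      split_ifs
      · rw [lowerTail_of_lt N T (by omega)]
      · rfl
  simp only [lowerField_eq_sum_lowerTail_smul, map_sum, map_smul, map_sub, coord_basisVec,
    smul_sub, smul_eq_mul, mul_ite, mul_one, mul_zero, sum_sub_distrib]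
  rw [hcolumn (j + 1) (by omega), hcolumn j le_rfl]

theorem raiseExponent_lowerField {i j m : ℕ} (T : Coords N) (hj : 1 ≤ j) (hi : i < N)
    (hm : m ≤ i) :
    raiseExponent N i m (lowerField N j T)
      = (if m = j then Real.exp (lowerExponent N j (N + j - i - 1) T) else 0)
        - (if m = j + 1 then Real.exp (lowerExponent N j (N + j - i) T) else 0) := by
  rw [raiseExponent, sub_apply, coord_lowerField N T hj (by omega),
    coord_lowerField N T hj (by omega)]
  split_ifs with hm₁ _ hm₀ <;> first | omega | skip
  · subst hm₁
    rw [show N + (j + 1) - i = N + j - i + 1 by omega, Nat.add_sub_cancel]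
    linear_combination -lowerTail_sub_lowerTail_succ N T (j := j) (show N + j - i ≤ N - 1 by omega)
  · subst hm₀
    have h := lowerTail_sub_lowerTail_succ N T (j := m) (show N + m - i - 1 ≤ N - 1 by omega)
    rw [show N + m - i - 1 + 1 = N + m - i by omega] at h
    linear_combination h
  · simp

theorem fderiv_raiseField_apply (i : ℕ) (T w : Coords N) :
    fderiv ℝ (raiseField N i) T w
      = ∑ k ∈ Icc 1 i, (Real.exp (raiseExponent N i k T) * raiseExponent N i k w)
          • raiseDirSum N i k :=
  fderiv_sum_exp_smul_apply _ _ _ T w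

theorem fderiv_lowerField_apply (j : ℕ) (T w : Coords N) :
    fderiv ℝ (lowerField N j) T w
      = ∑ k ∈ Icc j (N - 1), (Real.exp (lowerExponent N j k T) * lowerExponent N j k w)
          • lowerDir N j k :=
  fderiv_sum_exp_smul_apply _ _ _ T w

theorem fderiv_lowerPotential_apply (μ : ℕ → ℂ) (j : ℕ) (T w : Coords N) :
    fderiv ℝ (lowerPotential N μ j) T w
      = ∑ k ∈ Icc j (N - 1), (Real.exp (lowerExponent N j k T) * lowerExponent N j k w)
          • (μ j - μ (j + 1)) :=
  fderiv_sum_exp_smul_apply _ _ _ T w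

def bracketWeight (i j : ℕ) (T : Coords N) (m : ℕ) : ℝ :=
  Real.exp (raiseExponent N i m T) * Real.exp (lowerExponent N j (N + m - i - 1) T)

-- Both sides are `exp (T_{N+j-i,j} - T_{N+j-i,j+1})`.
theorem bracketWeight_succ {i j : ℕ} (T : Coords N) (hi : i < N) :
    bracketWeight N i j T (j + 1) = bracketWeight N i j T j := by
  simp only [bracketWeight, ← Real.exp_add, raiseExponent, lowerExponent, sub_apply]
  rw [show N + (j + 1) - i = N + j - i + 1 by omega, Nat.add_sub_cancel,
    Nat.sub_add_cancel (show 1 ≤ N + j - i by omega)]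
  ring_nf

theorem bracketWeight_self {i : ℕ} (T : Coords N) (hi₁ : 1 ≤ i) (hi : i < N) :
    bracketWeight N i i T i = 1 := by
  simp only [bracketWeight, ← Real.exp_add, raiseExponent, lowerExponent, sub_apply,
    Nat.add_sub_cancel, Nat.sub_add_cancel (show 1 ≤ N by omega),
    coord_eq_zero (show ¬(1 ≤ i ∧ i ≤ N ∧ N ≤ N - 1) by omega),
    coord_eq_zero (show ¬(1 ≤ i + 1 ∧ i + 1 ≤ N ∧ N ≤ N - 1) by omega)]
  simp

section BracketTerm

variable {M : Type*} [AddCommGroup M] [Module ℝ M]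

/-- Of the exponents of the raising operator, only those of columns `j` and `j + 1` meet the
variables of `E_{j+1,j}`; both parts of the commutator reduce to this two-term expression. -/
def bracketTerm (i j : ℕ) (T : Coords N) (Q : ℕ → M) : M :=
  (if j ≤ i then bracketWeight N i j T j • Q j else 0)
    - (if j + 1 ≤ i then bracketWeight N i j T (j + 1) • Q (j + 1) else 0)

theorem bracketTerm_sub (i j : ℕ) (T : Coords N) (Q Q' : ℕ → M) :
    bracketTerm N i j T Q - bracketTerm N i j T Q' = bracketTerm N i j T (Q - Q') := by
  simp only [bracketTerm, Pi.sub_apply, smul_sub]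
  split_ifs <;> abel

theorem bracketTerm_eq {i j : ℕ} (T : Coords N) (hi₁ : 1 ≤ i) (hi : i < N) (Q : ℕ → M)
    (hQ : j + 1 ≤ i → Q (j + 1) = Q j) :
    bracketTerm N i j T Q = if i = j then Q i else 0 := by
  rcases lt_trichotomy j i with hji | rfl | hij
  · rw [bracketTerm, if_pos hji.le, if_pos (show j + 1 ≤ i from hji), bracketWeight_succ N T hi,
      hQ hji, sub_self, if_neg hji.ne']
  · rw [bracketTerm, if_pos le_rfl, if_neg (by omega), bracketWeight_self N T hi₁ hi, one_smul,
      sub_zero, if_pos rfl]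
  · rw [bracketTerm, if_neg (by omega), if_neg (by omega), sub_zero, if_neg hij.ne]

theorem sum_lowerExponent_raiseField_smul {i j : ℕ} (T : Coords N) (hj : 1 ≤ j) (hi : i < N)
    (P : ℕ → M) :
    ∑ k ∈ Icc j (N - 1),
        (Real.exp (lowerExponent N j k T) * lowerExponent N j k (raiseField N i T)) • P k
      = bracketTerm N i j T fun m => P (N + m - i - 1) := by
  rw [sum_congr rfl fun k hk => by rw [lowerExponent_raiseField N T hj hi (mem_Icc.1 hk).2]]
  simp only [mul_sub, mul_ite, mul_zero, sub_smul, ite_smul, zero_smul, sum_sub_distrib,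
    sum_ite_eq', mem_Icc, bracketTerm, bracketWeight]
  rw [show N + (j + 1) - i - 1 = N + j - i by omega]
  congr 1 <;> exact if_congr (by omega) (by rw [mul_comm]) rfl

end BracketTerm

theorem fderiv_raiseField_apply_lowerField {i j : ℕ} (T : Coords N) (hj : 1 ≤ j) (hi : i < N) :
    fderiv ℝ (raiseField N i) T (lowerField N j T) = bracketTerm N i j T (raiseDirSum N i) := by
  rw [fderiv_raiseField_apply, sum_congr rfl fun m hm => by
    rw [raiseExponent_lowerField N T hj hi (mem_Icc.1 hm).2]]
  simp only [mul_sub, mul_ite, mul_zero, sub_smul, ite_smul, zero_smul, sum_sub_distrib,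
    sum_ite_eq', mem_Icc, bracketTerm, bracketWeight]
  rw [show N + (j + 1) - i - 1 = N + j - i by omega]
  congr 1 <;> exact if_congr (by omega) rfl rfl

theorem lowerDir_sub_raiseDirSum_succ {i j : ℕ} (hi : i < N) :
    lowerDir N j (N + (j + 1) - i - 1) - raiseDirSum N i (j + 1)
      = lowerDir N j (N + j - i - 1) - raiseDirSum N i j := by
  rw [show N + (j + 1) - i - 1 = N + j - i - 1 + 1 by omega, lowerDir, lowerDir,
    sum_Icc_succ_top (by omega), raiseDirSum, raiseDirSum, sum_Icc_succ_top (by omega), raiseDir,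
    show N + (j + 1) - i - 1 = N + j - i - 1 + 1 by omega, Nat.add_sub_cancel]
  abel

theorem lowerDir_sub_raiseDirSum_self {i : ℕ} (hi₁ : 1 ≤ i) (hi : i < N) :
    lowerDir N i (N + i - i - 1) - raiseDirSum N i i = cartanField N i - cartanField N (i + 1) := by
  have hlower : lowerDir N i (N - 1)
      = ∑ s ∈ Icc (i + 1) (N - 1), basisVec N s (i + 1) - ∑ s ∈ Icc i (N - 1), basisVec N s i := by
    rw [lowerDir, sum_sub_distrib, ← add_sum_Ioc_eq_sum_Icc (show i ≤ N - 1 by omega),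
      ← Icc_add_one_left_eq_Ioc, basisVec_eq_zero (by omega), zero_add]
  have hshift : ∑ n ∈ Icc 1 i, basisVec N (N + n - i - 1) (n - 1)
      = ∑ k ∈ Icc 1 (i - 1), basisVec N (N + k - i) k := by
    rw [← add_sum_Ioc_eq_sum_Icc hi₁, ← Icc_add_one_left_eq_Ioc, basisVec_eq_zero (by omega),
      zero_add, ← Nat.sub_add_cancel hi₁, ← map_add_right_Icc, sum_map, Nat.sub_add_cancel hi₁]
    refine sum_congr rfl fun k _ => ?_
    simp only [addRightEmbedding_apply, Nat.add_sub_cancel]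
    congr 1
    omega
  simp only [Nat.add_sub_cancel, hlower, raiseDirSum, raiseDir, sum_sub_distrib]
  rw [hshift, cartanField, cartanField, Nat.add_sub_cancel]
  simp only [Nat.sub_sub]
  abel

theorem lieBracket_raiseField_lowerField {i j : ℕ} (T : Coords N) (hi₁ : 1 ≤ i) (hi : i < N)
    (hj : 1 ≤ j) :
    VectorField.lieBracket ℝ (raiseField N i) (lowerField N j) T
      = if i = j then cartanField N i - cartanField N (i + 1) else 0 := by
  rw [VectorField.lieBracket, fderiv_lowerField_apply, sum_lowerExponent_raiseField_smul N T hj hi,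
    fderiv_raiseField_apply_lowerField N T hj hi, bracketTerm_sub,
    bracketTerm_eq N T hi₁ hi _ fun _ => lowerDir_sub_raiseDirSum_succ N hi]
  split_ifs with hij
  · subst hij
    exact lowerDir_sub_raiseDirSum_self N hi₁ hi
  · rfl

theorem fderiv_lowerPotential_apply_raiseField (μ : ℕ → ℂ) {i j : ℕ} (T : Coords N)
    (hi₁ : 1 ≤ i) (hi : i < N) (hj : 1 ≤ j) :
    fderiv ℝ (lowerPotential N μ j) T (raiseField N i T)
      = if i = j then μ i - μ (i + 1) else 0 := by
  rw [fderiv_lowerPotential_apply, sum_lowerExponent_raiseField_smul N T hj hi,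
    bracketTerm_eq N T hi₁ hi _ fun _ => rfl]
  split_ifs with hij
  · rw [hij]
  · rfl

end GaussGivental

open GaussGivental

theorem commutator_raise_lower_general (N : ℕ) (μ : ℕ → ℂ)
    (f : ((Fin N × Fin N) → ℝ) → ℂ) (hf : ContDiff ℝ (⊤ : ℕ∞) f)
    (i j : ℕ) (hi1 : 1 ≤ i) (hi2 : i ≤ N - 1) (hj1 : 1 ≤ j)
    (T : (Fin N × Fin N) → ℝ) :
    Er N i (fun S => El N μ j f S) T - El N μ j (fun S => Er N i f S) T
      = (((if i = j then 1 else 0) : ℂ)) * (Ed N μ i f T - Ed N μ (i + 1) f T) := by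
  have hi : i < N := by omega
  have h2 : minSmoothness ℝ 2 ≤ ((⊤ : ℕ∞) : WithTop ℕ∞) := by
    simpa using WithTop.coe_le_coe.2 (le_top : (2 : ℕ∞) ≤ ⊤)
  simp only [Er_eq_fderiv_raiseField, El_eq_fderiv_lowerField, Ed_eq_fderiv_cartanField]
  rw [firstOrder_commutator_eq_lieBracket (X := raiseField N i) (Y := lowerField N j)
      (c := lowerPotential N μ j) hf.contDiffAt h2
      (hasFDerivAt_sum_exp_smul _ _ _ T).differentiableAt
      (hasFDerivAt_sum_exp_smul _ _ _ T).differentiableAt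
      (hasFDerivAt_sum_exp_smul _ _ _ T).differentiableAt,
    lieBracket_raiseField_lowerField N T hi1 hi hj1,
    fderiv_lowerPotential_apply_raiseField N μ T hi1 hi hj1]
  split_ifs with hij
  · simp only [map_sub]
    ring
  · simp

/-- the commutation relation
`[E_{i,i+1}, E_{j+1,j}] = δ_{i,j} (E_{i,i} − E_{i+1,i+1})` for the Gauss–Givental operators. -/
theorem commutator_raise_lower (N : ℕ) (hN : 2 ≤ N) (μ : ℕ → ℂ)
    (f : ((Fin N × Fin N) → ℝ) → ℂ) (hf : ContDiff ℝ (⊤ : ℕ∞) f)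
    (i j : ℕ) (hi1 : 1 ≤ i) (hi2 : i ≤ N - 1) (hj1 : 1 ≤ j) (hj2 : j ≤ N - 1)
    (T : (Fin N × Fin N) → ℝ) :
    Er N i (fun S => El N μ j f S) T - El N μ j (fun S => Er N i f S) T
      = (((if i = j then 1 else 0) : ℂ)) * (Ed N μ i f T - Ed N μ (i + 1) f T) :=
  commutator_raise_lower_general N μ f hf i j hi1 hi2 hj1 T
end
end

section
/- For every integer N ≥ 2, all indices 1 ≤ i, j ≤ N−1 with |i − j| ≥ 2, and every smooth complex-valued function f of the variables T_{k,i}, the Gauss–Givental raising operators commute, E_{i,i+1}(E_{j,j+1} f) = E_{j,j+1}(E_{i,i+1} f), and likewise the lowering operators commute, E_{i+1,i}(E_{j+1,j} f) = E_{j+1,j}(E_{i+1,i} f). -/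
noncomputable section

/-!
`E_{i,i+1}` and `E_{i+1,i}` are both first-order operators `f ↦ Σ_a c_a (m f + ∂_{w_a} f)` with
constant directions `w_a`. Two such operators commute as soon as the coefficients of each are
constant along the directions of the other: the composite is then
`Σ_{a,b} c_a c'_b (m m' f + m ∂_{w'_b} f + m' ∂_{w_a} f + ∂²f(w_a, w'_b))`, symmetric by Schwarz.
The coefficients and directions of `E_{i,i+1}` only involve the variables `T_{k,l}` with
`k - l ∈ {N - i - 1, N - i}`, those of `E_{i+1,i}` only the columns `l ∈ {i, i + 1}`; for
`|i - j| ≥ 2` these sets are disjoint.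
-/

open Finset

section FirstOrder

variable {V 𝔸 ι κ : Type*} [NormedAddCommGroup V] [NormedSpace ℝ V]
  [NormedCommRing 𝔸] [NormedAlgebra ℝ 𝔸]

def firstOrderOp (s : Finset ι) (c : ι → V → 𝔸) (m : 𝔸) (w : ι → V) (f : V → 𝔸) (x : V) : 𝔸 :=
  ∑ a ∈ s, c a x * (m * f x + fderiv ℝ f x (w a))

theorem fderiv_apply_eq_zero_of_add_smul_eq {c : V → 𝔸} {x v : V} (hc : DifferentiableAt ℝ c x)
    (h : ∀ t : ℝ, c (x + t • v) = c x) : fderiv ℝ c x v = 0 := by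
  rw [← hc.lineDeriv_eq_fderiv, lineDeriv, funext h, deriv_const]

theorem fderiv_firstOrderOp_apply {s : Finset ι} {c : ι → V → 𝔸} {m : 𝔸} {w : ι → V}
    {f : V → 𝔸} {v : V} (hc : ∀ a ∈ s, Differentiable ℝ (c a))
    (hcv : ∀ a ∈ s, ∀ x (t : ℝ), c a (x + t • v) = c a x) (hf : ContDiff ℝ 2 f) (x : V) :
    fderiv ℝ (firstOrderOp s c m w f) x v =
      ∑ a ∈ s, c a x * (m * fderiv ℝ f x v + fderiv ℝ (fderiv ℝ f) x v (w a)) := by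
  have hf1 : Differentiable ℝ f := hf.differentiable two_ne_zero
  have hf2 : Differentiable ℝ (fderiv ℝ f) :=
    (hf.fderiv_right (m := 1) le_rfl).differentiable one_ne_zero
  have hterm : ∀ a ∈ s, fderiv ℝ (fun y => c a y * (m * f y + fderiv ℝ f y (w a))) x v
      = c a x * (m * fderiv ℝ f x v + fderiv ℝ (fderiv ℝ f) x v (w a)) := by
    intro a ha
    have hcx := fderiv_apply_eq_zero_of_add_smul_eq (hc a ha x) (hcv a ha x)
    rw [fderiv_fun_mul (hc a ha x) (by fun_prop), fderiv_fun_add (by fun_prop) (by fun_prop),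
      fderiv_const_mul (hf1 x), fderiv_clm_apply (hf2 x) (differentiableAt_const _)]
    simp [hcx, mul_add]
  unfold firstOrderOp
  rw [fderiv_fun_sum (fun a ha => by fun_prop), FunLike.coe_sum, Finset.sum_apply]
  exact sum_congr rfl hterm

theorem firstOrderOp_firstOrderOp_apply {s : Finset ι} {c : ι → V → 𝔸} {m : 𝔸} {w : ι → V}
    {s' : Finset κ} {c' : κ → V → 𝔸} {m' : 𝔸} {w' : κ → V} {f : V → 𝔸}
    (hc' : ∀ b ∈ s', Differentiable ℝ (c' b))
    (hc'w : ∀ a ∈ s, ∀ b ∈ s', ∀ x (t : ℝ), c' b (x + t • w a) = c' b x) (hf : ContDiff ℝ 2 f)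
    (x : V) :
    firstOrderOp s c m w (firstOrderOp s' c' m' w' f) x =
      ∑ a ∈ s, ∑ b ∈ s', c a x * c' b x * (m * m' * f x + m * fderiv ℝ f x (w' b)
        + m' * fderiv ℝ f x (w a) + fderiv ℝ (fderiv ℝ f) x (w a) (w' b)) := by
  rw [firstOrderOp]
  refine sum_congr rfl fun a ha => ?_
  rw [fderiv_firstOrderOp_apply hc' (hc'w a ha) hf, firstOrderOp, mul_sum, ← sum_add_distrib,
    mul_sum]
  exact sum_congr rfl fun b _ => by ring

theorem firstOrderOp_comm {s : Finset ι} {c : ι → V → 𝔸} {m : 𝔸} {w : ι → V}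
    {s' : Finset κ} {c' : κ → V → 𝔸} {m' : 𝔸} {w' : κ → V} {f : V → 𝔸}
    (hc : ∀ a ∈ s, Differentiable ℝ (c a)) (hc' : ∀ b ∈ s', Differentiable ℝ (c' b))
    (hcw' : ∀ a ∈ s, ∀ b ∈ s', ∀ x (t : ℝ), c a (x + t • w' b) = c a x)
    (hc'w : ∀ a ∈ s, ∀ b ∈ s', ∀ x (t : ℝ), c' b (x + t • w a) = c' b x) (hf : ContDiff ℝ 2 f)
    (x : V) :
    firstOrderOp s c m w (firstOrderOp s' c' m' w' f) x =
      firstOrderOp s' c' m' w' (firstOrderOp s c m w f) x := by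
  have hsymm : IsSymmSndFDerivAt ℝ f x := hf.contDiffAt.isSymmSndFDerivAt (by simp)
  rw [firstOrderOp_firstOrderOp_apply hc' hc'w hf,
    firstOrderOp_firstOrderOp_apply hc (fun b hb a ha => hcw' a ha b hb) hf, sum_comm]
  refine sum_congr rfl fun b _ => sum_congr rfl fun a _ => ?_
  rw [hsymm (w' b) (w a)]
  ring

end FirstOrder

section GaussGivental

variable {N : ℕ}

def coord (N p q : ℕ) : ((Fin N × Fin N) → ℝ) →L[ℝ] ℝ :=
  if h : 1 ≤ q ∧ q ≤ p ∧ p ≤ N - 1 then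
    ContinuousLinearMap.proj ((⟨p - 1, by omega⟩ : Fin N), (⟨q - 1, by omega⟩ : Fin N))
  else 0

def basisVec (N p q : ℕ) : (Fin N × Fin N) → ℝ :=
  if h : 1 ≤ q ∧ q ≤ p ∧ p ≤ N - 1 then
    Pi.single ((⟨p - 1, by omega⟩ : Fin N), (⟨q - 1, by omega⟩ : Fin N)) 1
  else 0

theorem tv_eq_coord (T : (Fin N × Fin N) → ℝ) (p q : ℕ) : tv N T p q = coord N p q T := by
  unfold tv coord
  split_ifs <;> rfl

theorem pd_eq_fderiv_basisVec (f : ((Fin N × Fin N) → ℝ) → ℂ) (p q : ℕ)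
    (T : (Fin N × Fin N) → ℝ) : pd N f p q T = fderiv ℝ f T (basisVec N p q) := by
  unfold pd basisVec
  split_ifs <;> simp

theorem coord_basisVec_of_ne {p q r s : ℕ} (h : p ≠ r ∨ q ≠ s) :
    coord N p q (basisVec N r s) = 0 := by
  unfold coord basisVec
  split_ifs with h₁ h₂
  · rw [ContinuousLinearMap.proj_apply, Pi.single_apply, if_neg]
    simp only [Prod.mk.injEq, Fin.mk.injEq]
    omega
  all_goals simp

def raiseCoeff (N i n : ℕ) (T : (Fin N × Fin N) → ℝ) : ℂ :=
  ∑ k ∈ Icc n i, (Real.exp ((coord N (N + k - i) k - coord N (N + k - i - 1) k) T) : ℂ)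

def raiseDir (N i n : ℕ) : (Fin N × Fin N) → ℝ :=
  basisVec N (N + n - i - 1) n - basisVec N (N + n - i - 1) (n - 1)

def lowerCoeff (N i k : ℕ) (T : (Fin N × Fin N) → ℝ) : ℂ :=
  (Real.exp ((coord N k i - coord N (k + 1) (i + 1)) T) : ℂ)

def lowerDir (N i k : ℕ) : (Fin N × Fin N) → ℝ :=
  ∑ s ∈ Icc i k, (basisVec N s (i + 1) - basisVec N s i)

theorem Er_eq_firstOrderOp (i : ℕ) :
    Er N i = firstOrderOp (Icc 1 i) (raiseCoeff N i) 0 (raiseDir N i) := by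
  ext f T
  simp only [Er, firstOrderOp, raiseCoeff, raiseDir, tv_eq_coord, pd_eq_fderiv_basisVec, map_sub,
    sub_apply, zero_mul, zero_add]

theorem El_eq_firstOrderOp (μ : ℕ → ℂ) (i : ℕ) :
    El N μ i = firstOrderOp (Icc i (N - 1)) (lowerCoeff N i) (μ i - μ (i + 1)) (lowerDir N i) := by
  ext f T
  simp only [El, firstOrderOp, lowerCoeff, lowerDir, tv_eq_coord, pd_eq_fderiv_basisVec, map_sub,
    map_sum, sub_apply]

theorem differentiable_raiseCoeff (i n : ℕ) : Differentiable ℝ (raiseCoeff N i n) := by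
  unfold raiseCoeff
  fun_prop

theorem differentiable_lowerCoeff (i k : ℕ) : Differentiable ℝ (lowerCoeff N i k) := by
  unfold lowerCoeff
  fun_prop

theorem raiseCoeff_add_smul_raiseDir {i j n m : ℕ} (hi : i ≤ N - 1) (hj : j ≤ N - 1)
    (hij : i + 2 ≤ j ∨ j + 2 ≤ i) (hn : n ∈ Icc 1 i) (hm : m ∈ Icc 1 j)
    (T : (Fin N × Fin N) → ℝ) (t : ℝ) :
    raiseCoeff N i n (T + t • raiseDir N j m) = raiseCoeff N i n T := by
  rw [mem_Icc] at hn hm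
  refine sum_congr rfl fun k hk => ?_
  rw [mem_Icc] at hk
  have hdir : (coord N (N + k - i) k - coord N (N + k - i - 1) k) (raiseDir N j m) = 0 := by
    simp (disch := omega) only [raiseDir, map_sub, sub_apply, coord_basisVec_of_ne, sub_self]
  rw [map_add, map_smul, hdir, smul_zero, add_zero]

theorem lowerCoeff_add_smul_lowerDir {i j k l : ℕ} (hij : i + 2 ≤ j ∨ j + 2 ≤ i)
    (T : (Fin N × Fin N) → ℝ) (t : ℝ) :
    lowerCoeff N i k (T + t • lowerDir N j l) = lowerCoeff N i k T := by
  have hdir : (coord N k i - coord N (k + 1) (i + 1)) (lowerDir N j l) = 0 := by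
    simp (disch := omega) only [lowerDir, map_sum, map_sub, sub_apply, coord_basisVec_of_ne,
      sub_self, sum_const_zero]
  rw [lowerCoeff, lowerCoeff, map_add, map_smul, hdir, smul_zero, add_zero]

end GaussGivental

theorem raise_raise_and_lower_lower_commute_general (N : ℕ) (μ : ℕ → ℂ)
    (f : ((Fin N × Fin N) → ℝ) → ℂ) (hf : ContDiff ℝ (⊤ : ℕ∞) f)
    (i j : ℕ) (hi2 : i ≤ N - 1) (hj2 : j ≤ N - 1)
    (hij : i + 2 ≤ j ∨ j + 2 ≤ i)
    (T : (Fin N × Fin N) → ℝ) :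
    Er N i (fun S => Er N j f S) T = Er N j (fun S => Er N i f S) T ∧
    El N μ i (fun S => El N μ j f S) T = El N μ j (fun S => El N μ i f S) T := by
  have hf2 : ContDiff ℝ 2 f := hf.of_le (WithTop.coe_le_coe.2 le_top)
  simp only [Er_eq_firstOrderOp, El_eq_firstOrderOp]
  constructor
  · exact firstOrderOp_comm (fun _ _ => differentiable_raiseCoeff _ _)
      (fun _ _ => differentiable_raiseCoeff _ _)
      (fun _ hn _ hm => raiseCoeff_add_smul_raiseDir hi2 hj2 hij hn hm)
      (fun _ hn _ hm => raiseCoeff_add_smul_raiseDir hj2 hi2 hij.symm hm hn) hf2 T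
  · exact firstOrderOp_comm (fun _ _ => differentiable_lowerCoeff _ _)
      (fun _ _ => differentiable_lowerCoeff _ _)
      (fun _ _ _ _ => lowerCoeff_add_smul_lowerDir hij)
      (fun _ _ _ _ => lowerCoeff_add_smul_lowerDir hij.symm) hf2 T

/-- for `|i − j| ≥ 2` the Gauss–Givental raising operators commute, and
likewise the lowering operators commute. -/
theorem raise_raise_and_lower_lower_commute (N : ℕ) (hN : 2 ≤ N) (μ : ℕ → ℂ)
    (f : ((Fin N × Fin N) → ℝ) → ℂ) (hf : ContDiff ℝ (⊤ : ℕ∞) f)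
    (i j : ℕ) (hi1 : 1 ≤ i) (hi2 : i ≤ N - 1) (hj1 : 1 ≤ j) (hj2 : j ≤ N - 1)
    (hij : i + 2 ≤ j ∨ j + 2 ≤ i)
    (T : (Fin N × Fin N) → ℝ) :
    Er N i (fun S => Er N j f S) T = Er N j (fun S => Er N i f S) T ∧
    El N μ i (fun S => El N μ j f S) T = El N μ j (fun S => El N μ i f S) T :=
  raise_raise_and_lower_lower_commute_general N μ f hf i j hi2 hj2 hij T
end
end
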